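/- arXiv:math/0512431 — 2 statements merged into one kernel-verified Lean document; each statement's English description precedes it below -/
import Mathlib

section
/- Let A : Ω → ℝ^{d×d} be measurable, symmetric-valued and locally uniformly elliptic and V ∈ L^p_loc(Ω), p > d/2. Let ψ ∈ C¹(Ω) be a nonnegative weak subsolution of the equation Pψ := -∇·(A∇ψ) + Vψ = 0 in Ω. Then for every nonnegative v ∈ C_c^∞(Ω): ∫_Ω ( A∇(ψv)·∇(ψv) + V (ψv)² ) dx ≤ ∫_Ω ψ² A∇v·∇v dx. -/
open MeasureTheory Filter Topology Matrix

noncomputable def grad {d : ℕ} (f : (Fin d → ℝ) → ℝ) (x : Fin d → ℝ) : Fin d → ℝ :=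
  fun i => fderiv ℝ f x (Pi.single i 1)

noncomputable def aForm {d : ℕ} (Ω : Set (Fin d → ℝ))
    (A : (Fin d → ℝ) → Matrix (Fin d) (Fin d) ℝ) (V : (Fin d → ℝ) → ℝ)
    (u : (Fin d → ℝ) → ℝ) : ℝ :=
  ∫ x in Ω, (((A x).mulVec (grad u x)) ⬝ᵥ (grad u x) + V x * (u x) ^ 2)

noncomputable def pairing {d : ℕ} (Ω : Set (Fin d → ℝ))
    (A : (Fin d → ℝ) → Matrix (Fin d) (Fin d) ℝ) (V : (Fin d → ℝ) → ℝ)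
    (ψ φ : (Fin d → ℝ) → ℝ) : ℝ :=
  ∫ x in Ω, (((A x).mulVec (grad ψ x)) ⬝ᵥ (grad φ x) + V x * ψ x * φ x)

def LocUnifElliptic {d : ℕ} (Ω : Set (Fin d → ℝ))
    (A : (Fin d → ℝ) → Matrix (Fin d) (Fin d) ℝ) : Prop :=
  ∀ K : Set (Fin d → ℝ), K ⊆ Ω → IsCompact K → ∃ μ : ℝ, 1 < μ ∧
    ∀ x ∈ K, ∀ ξ : Fin d → ℝ,
      μ⁻¹ * (∑ i, ξ i ^ 2) ≤ ((A x).mulVec ξ) ⬝ᵥ ξ ∧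
      ((A x).mulVec ξ) ⬝ᵥ ξ ≤ μ * (∑ i, ξ i ^ 2)

def LocLp {d : ℕ} (Ω : Set (Fin d → ℝ)) (V : (Fin d → ℝ) → ℝ) (p : ℝ) : Prop :=
  ∀ K : Set (Fin d → ℝ), K ⊆ Ω → IsCompact K →
    MemLp V (ENNReal.ofReal p) (volume.restrict K)

def IsTest {d : ℕ} (Ω : Set (Fin d → ℝ)) (φ : (Fin d → ℝ) → ℝ) : Prop :=
  ContDiff ℝ 1 φ ∧ HasCompactSupport φ ∧ tsupport φ ⊆ Ω

def IsSmoothTest {d : ℕ} (Ω : Set (Fin d → ℝ)) (φ : (Fin d → ℝ) → ℝ) : Prop :=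
  ContDiff ℝ (⊤ : ℕ∞) φ ∧ HasCompactSupport φ ∧ tsupport φ ⊆ Ω

def WeakSol {d : ℕ} (Ω : Set (Fin d → ℝ))
    (A : (Fin d → ℝ) → Matrix (Fin d) (Fin d) ℝ) (V : (Fin d → ℝ) → ℝ)
    (ψ : (Fin d → ℝ) → ℝ) : Prop :=
  ∀ φ, IsTest Ω φ → pairing Ω A V ψ φ = 0

def WeakSubsol {d : ℕ} (Ω : Set (Fin d → ℝ))
    (A : (Fin d → ℝ) → Matrix (Fin d) (Fin d) ℝ) (V : (Fin d → ℝ) → ℝ)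
    (ψ : (Fin d → ℝ) → ℝ) : Prop :=
  ∀ φ, IsTest Ω φ → (∀ x, 0 ≤ φ x) → pairing Ω A V ψ φ ≤ 0

def WeakSupersol {d : ℕ} (Ω : Set (Fin d → ℝ))
    (A : (Fin d → ℝ) → Matrix (Fin d) (Fin d) ℝ) (V : (Fin d → ℝ) → ℝ)
    (ψ : (Fin d → ℝ) → ℝ) : Prop :=
  ∀ φ, IsTest Ω φ → (∀ x, 0 ≤ φ x) → 0 ≤ pairing Ω A V ψ φ

lemma symm_dot' {d : ℕ} (M : Matrix (Fin d) (Fin d) ℝ) (hM : M.IsSymm) (a b : Fin d → ℝ) :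
    M.mulVec a ⬝ᵥ b = M.mulVec b ⬝ᵥ a := by
  calc M.mulVec a ⬝ᵥ b = b ⬝ᵥ M.mulVec a := dotProduct_comm _ _
    _ = (b ᵥ* M) ⬝ᵥ a := dotProduct_mulVec _ _ _
    _ = (Mᵀ *ᵥ b) ⬝ᵥ a := by rw [Matrix.mulVec_transpose]
    _ = M.mulVec b ⬝ᵥ a := by rw [hM.eq]

lemma key_alg' {d : ℕ} (M : Matrix (Fin d) (Fin d) ℝ) (hM : M.IsSymm)
    (a b : Fin d → ℝ) (s t w : ℝ) :
    M.mulVec (t • a + s • b) ⬝ᵥ (t • a + s • b) + w * (s * t) ^ 2 =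
      (M.mulVec a ⬝ᵥ ((t * t) • a + (s * t + s * t) • b) + w * s * (s * (t * t))) +
        s ^ 2 * (M.mulVec b ⬝ᵥ b) := by
  have hs := symm_dot' M hM a b
  simp only [Matrix.mulVec_add, Matrix.mulVec_smul, add_dotProduct, smul_dotProduct,
    dotProduct_add, dotProduct_smul, smul_eq_mul]
  linear_combination (-(s * t)) * hs

/-- Lemma 2.3, first part: if `ψ ≥ 0` is a weak subsolution of `-∇·(A∇u) + Vu = 0` in `Ω`,
then for every nonnegative `v ∈ C_c^∞(Ω)` one has `a_{A,V}[ψv] ≤ ∫ ψ² A∇v·∇v dx`. -/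
theorem stmt_1 {d : ℕ} (hd : 0 < d) (Ω : Set (Fin d → ℝ))
    (hΩo : IsOpen Ω) (hΩc : IsConnected Ω)
    (A : (Fin d → ℝ) → Matrix (Fin d) (Fin d) ℝ) (V : (Fin d → ℝ) → ℝ) (p : ℝ)
    (hAm : ∀ i j, Measurable fun x => A x i j)
    (hAs : ∀ x ∈ Ω, (A x).IsSymm)
    (hAe : LocUnifElliptic Ω A)
    (hp : (d : ℝ) / 2 < p) (hV : LocLp Ω V p)
    (ψ : (Fin d → ℝ) → ℝ) (hψc : ContDiffOn ℝ 1 ψ Ω)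
    (hψnn : ∀ x ∈ Ω, 0 ≤ ψ x)
    (hψsub : WeakSubsol Ω A V ψ)
    (v : (Fin d → ℝ) → ℝ) (hv : IsSmoothTest Ω v) (hvnn : ∀ x, 0 ≤ v x) :
    aForm Ω A V (fun x => ψ x * v x) ≤
      ∫ x in Ω, (ψ x) ^ 2 * (((A x).mulVec (grad v x)) ⬝ᵥ (grad v x)) := by
  classical
  obtain ⟨hvsm, hvcs, hvsupp⟩ := hv
  have hKc : IsCompact (tsupport v) := hvcs
  have hKΩ : tsupport v ⊆ Ω := hvsupp
  have hΩm : MeasurableSet Ω := hΩo.measurableSet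
  have hvC1 : ContDiff ℝ 1 v := hvsm.of_le (by simp)
  have hgradv : ∀ i, Continuous fun x => grad v x i := fun i =>
    (hvC1.continuous_fderiv one_ne_zero).clm_apply continuous_const
  have hψcont : ContinuousOn ψ Ω := hψc.continuousOn
  -- the test function φ = ψ v²
  set φ : (Fin d → ℝ) → ℝ := fun y => ψ y * (v y * v y) with hφ
  have hvz : ∀ x ∉ tsupport v, v x = 0 := fun x hx => image_eq_zero_of_notMem_tsupport hx
  have hφz : ∀ x ∉ tsupport v, φ x = 0 := fun x hx => by simp [hφ, hvz x hx]
  have hφsupp : tsupport φ ⊆ tsupport v :=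
    closure_minimal (fun x hx => by_contra fun h => hx (hφz x h)) (isClosed_tsupport v)
  have hφtest : IsTest Ω φ := by
    refine ⟨?_, hKc.of_isClosed_subset (isClosed_tsupport φ) hφsupp, hφsupp.trans hKΩ⟩
    rw [contDiff_iff_contDiffAt]
    intro x
    by_cases hx : x ∈ Ω
    · exact (hψc.contDiffAt (hΩo.mem_nhds hx)).mul (hvC1.contDiffAt.mul hvC1.contDiffAt)
    · have hxK : x ∉ tsupport v := fun h => hx (hKΩ h)
      have hev : φ =ᶠ[nhds x] fun _ => (0 : ℝ) := by
        filter_upwards [(isClosed_tsupport v).isOpen_compl.mem_nhds hxK] with y hy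
        exact hφz y hy
      exact (contDiffAt_const (c := (0 : ℝ))).congr_of_eventuallyEq hev
  have hφnn : ∀ x, 0 ≤ φ x := by
    intro x
    by_cases hx : x ∈ Ω
    · exact mul_nonneg (hψnn x hx) (mul_self_nonneg _)
    · rw [hφz x fun h => hx (hKΩ h)]
  have hpair : pairing Ω A V ψ φ ≤ 0 := hψsub φ hφtest hφnn
  -- abbreviations for the integrands
  set g : (Fin d → ℝ) → ℝ :=
    fun x => ψ x ^ 2 * ((A x).mulVec (grad v x) ⬝ᵥ grad v x) with hg
  set f2 : (Fin d → ℝ) → ℝ :=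
    fun x => (A x).mulVec (grad ψ x) ⬝ᵥ grad φ x + V x * ψ x * φ x with hf2
  -- pointwise identity on Ω
  have hpoint : ∀ x ∈ Ω,
      ((A x).mulVec (grad (fun y => ψ y * v y) x) ⬝ᵥ grad (fun y => ψ y * v y) x
        + V x * ((ψ x * v x)) ^ 2) = f2 x + g x := by
    intro x hx
    have hψd : DifferentiableAt ℝ ψ x :=
      (hψc.contDiffAt (hΩo.mem_nhds hx)).differentiableAt one_ne_zero
    have hvd : DifferentiableAt ℝ v x := hvC1.differentiable one_ne_zero x
    have h1 : grad (fun y => ψ y * v y) x = v x • grad ψ x + ψ x • grad v x := by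
      funext i
      simp only [grad, fderiv_fun_mul hψd hvd, ContinuousLinearMap.add_apply,
        ContinuousLinearMap.smul_apply, Pi.add_apply, Pi.smul_apply, smul_eq_mul]
      ring
    have h2 : grad φ x
        = (v x * v x) • grad ψ x + (ψ x * v x + ψ x * v x) • grad v x := by
      funext i
      have : fderiv ℝ φ x = ψ x • fderiv ℝ (fun y => v y * v y) x
          + (v x * v x) • fderiv ℝ ψ x := fderiv_mul hψd (hvd.mul hvd)
      simp only [grad, this, fderiv_fun_mul hvd hvd, ContinuousLinearMap.add_apply,
        ContinuousLinearMap.smul_apply, Pi.add_apply, Pi.smul_apply, smul_eq_mul]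
      ring
    simp only [hf2, hg, h1, h2, hφ]
    rw [show grad (fun y => ψ y * (v y * v y)) x = _ from h2]
    exact key_alg' (A x) (hAs x hx) (grad ψ x) (grad v x) (ψ x) (v x) (V x)
  -- grad v vanishes outside the support, hence so does g
  have hg0 : ∀ x ∉ tsupport v, g x = 0 := by
    intro x hx
    have hfd : fderiv ℝ v x = 0 := by
      by_contra h
      exact hx (support_fderiv_subset ℝ (by simpa [Function.mem_support] using h))
    have : grad v x = 0 := by funext i; simp [grad, hfd]
    simp [hg, this]
  -- measurability of g
  have hQm : Measurable fun x => (A x).mulVec (grad v x) ⬝ᵥ grad v x := by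
    simp only [Matrix.mulVec, dotProduct]
    exact Finset.measurable_sum _ fun i _ =>
      (Finset.measurable_sum _ fun j _ => (hAm i j).mul (hgradv j).measurable).mul
        (hgradv i).measurable
  -- nonnegativity of the quadratic form on Ω
  have hQnn : ∀ x ∈ Ω, 0 ≤ (A x).mulVec (grad v x) ⬝ᵥ grad v x := by
    intro x hx
    obtain ⟨μ₀, hμ₀, hell⟩ := hAe {x} (by simpa using hx) isCompact_singleton
    have h1 := (hell x rfl (grad v x)).1
    have h2 : (0:ℝ) ≤ μ₀⁻¹ * ∑ i, grad v x i ^ 2 := by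
      apply mul_nonneg (by positivity) (Finset.sum_nonneg fun i _ => sq_nonneg _)
    linarith
  -- integrability of g
  have hgK : MeasureTheory.IntegrableOn g (tsupport v) := by
    obtain ⟨μ₀, hμ₀, hell⟩ := hAe (tsupport v) hKΩ hKc
    have hScont : Continuous fun x => ∑ i, grad v x i ^ 2 :=
      continuous_finset_sum _ fun i _ => (hgradv i).pow 2
    obtain ⟨C₂, hC₂⟩ := hKc.exists_bound_of_continuousOn hScont.continuousOn
    obtain ⟨C₁, hC₁⟩ := hKc.exists_bound_of_continuousOn (hψcont.mono hKΩ)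
    haveI : IsFiniteMeasure (volume.restrict (tsupport v)) :=
      ⟨by rw [Measure.restrict_apply_univ]; exact hKc.measure_lt_top⟩
    refine ⟨?_, ?_⟩
    · refine AEMeasurable.aestronglyMeasurable ?_
      exact ((((hψcont.mono hKΩ).aemeasurable hKc.measurableSet).pow_const 2).mul
        hQm.aemeasurable)
    · apply MeasureTheory.HasFiniteIntegral.of_bounded (C := C₁ ^ 2 * (μ₀ * C₂))
      refine (MeasureTheory.ae_restrict_iff' hKc.measurableSet).2 (Filter.Eventually.of_forall ?_)
      intro x hx
      have hQ1 : (A x).mulVec (grad v x) ⬝ᵥ grad v x ≤ μ₀ * ∑ i, grad v x i ^ 2 :=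
        (hell x hx (grad v x)).2
      have hQ0 : 0 ≤ (A x).mulVec (grad v x) ⬝ᵥ grad v x := hQnn x (hKΩ hx)
      have hS : ∑ i, grad v x i ^ 2 ≤ C₂ :=
        le_trans (le_abs_self _) (hC₂ x hx)
      have hμ0 : (0:ℝ) < μ₀ := lt_trans one_pos hμ₀
      have hψb : ψ x ^ 2 ≤ C₁ ^ 2 := by
        have := hC₁ x hx
        rw [Real.norm_eq_abs] at this
        calc ψ x ^ 2 = |ψ x| ^ 2 := (sq_abs _).symm
          _ ≤ C₁ ^ 2 := pow_le_pow_left₀ (abs_nonneg _) this 2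
      have hgx : g x = ψ x ^ 2 * ((A x).mulVec (grad v x) ⬝ᵥ grad v x) := rfl
      rw [Real.norm_eq_abs, hgx, abs_of_nonneg (mul_nonneg (sq_nonneg _) hQ0)]
      have hQ2 : (A x).mulVec (grad v x) ⬝ᵥ grad v x ≤ μ₀ * C₂ :=
        le_trans hQ1 (by nlinarith)
      exact mul_le_mul hψb hQ2 hQ0 (sq_nonneg _)
  have hgrest : MeasureTheory.IntegrableOn g (Ω \ tsupport v) := by
    refine (MeasureTheory.integrableOn_zero).congr_fun
      (fun x hx => (hg0 x hx.2).symm) (hΩm.diff hKc.measurableSet)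
  have hgint : MeasureTheory.IntegrableOn g Ω := by
    refine (hgK.union hgrest).mono_set ?_
    intro x hx
    by_cases h : x ∈ tsupport v
    · exact Or.inl h
    · exact Or.inr ⟨hx, h⟩
  -- rewrite aForm via the pointwise identity
  have hcongr : aForm Ω A V (fun x => ψ x * v x) = ∫ x in Ω, (f2 x + g x) := by
    unfold aForm
    exact MeasureTheory.setIntegral_congr_fun hΩm fun x hx => hpoint x hx
  have hRHS : (∫ x in Ω, (ψ x) ^ 2 * (((A x).mulVec (grad v x)) ⬝ᵥ (grad v x)))
      = ∫ x in Ω, g x := rfl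
  by_cases hint : MeasureTheory.IntegrableOn f2 Ω
  · have hsplit : (∫ x in Ω, (f2 x + g x)) = (∫ x in Ω, f2 x) + ∫ x in Ω, g x :=
      MeasureTheory.integral_add hint hgint
    have hpairf : pairing Ω A V ψ φ = ∫ x in Ω, f2 x := rfl
    rw [hcongr, hsplit, hRHS]
    rw [hpairf] at hpair
    linarith
  · have hnot : ¬ MeasureTheory.Integrable (fun x => f2 x + g x) (volume.restrict Ω) := by
      intro h
      have h2 := h.sub hgint
      have heq : (fun x => f2 x + g x) - g = f2 := by funext x; simp
      rw [heq] at h2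
      exact hint h2
    rw [hcongr, MeasureTheory.integral_undef hnot, hRHS]
    exact MeasureTheory.setIntegral_nonneg hΩm fun x hx =>
      mul_nonneg (sq_nonneg _) (hQnn x hx)
end

section
/- Let d ≤ 2 and let σ be a strictly positive C¹ function on ℝ^d. Suppose ψ ∈ C¹(ℝ^d) is a weak solution of the equation ∇·(σ²∇ψ) = 0 in ℝ^d (i.e. ∫ σ²∇ψ·∇φ dx = 0 for all compactly supported C¹ functions φ), such that ψ is not identically ≤ 0 and the product σψ is bounded on ℝ^d. Then ψ is a constant function (a positive constant). -/
open MeasureTheory Filter Topology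

noncomputable def uu {d : ℕ} (x : Fin d → ℝ) : ℝ := ∑ i, x i ^ 2

lemma uu_nonneg {d : ℕ} (x : Fin d → ℝ) : 0 ≤ uu x :=
  Finset.sum_nonneg fun i _ => sq_nonneg _

lemma uu_contDiff {d : ℕ} : ContDiff ℝ 1 (uu (d := d)) := by
  apply ContDiff.sum
  intro i _
  exact (contDiff_apply ℝ ℝ i).pow 2

lemma hasFDerivAt_uu {d : ℕ} (x : Fin d → ℝ) :
    HasFDerivAt uu (∑ i, (2 * x i) • (ContinuousLinearMap.proj (R := ℝ) (φ := fun _ : Fin d => ℝ) i)) x := by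
  apply HasFDerivAt.fun_sum
  intro i _
  have h1 : HasFDerivAt (fun y : Fin d → ℝ => y i)
      (ContinuousLinearMap.proj (R := ℝ) (φ := fun _ : Fin d => ℝ) i) x :=
    (ContinuousLinearMap.proj (R := ℝ) (φ := fun _ : Fin d => ℝ) i).hasFDerivAt
  have h2 := h1.mul h1
  have : (fun y : Fin d → ℝ => y i ^ 2) = fun y => y i * y i := by
    funext y; ring
  rw [this]
  rw [two_mul, add_smul]
  exact h2

lemma uu_proj_single {d : ℕ} (x : Fin d → ℝ) (i : Fin d) :
    (∑ j, (2 * x j) • (ContinuousLinearMap.proj (R := ℝ) (φ := fun _ : Fin d => ℝ) j))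
      (Pi.single i 1) = 2 * x i := by
  simp [ContinuousLinearMap.sum_apply, ContinuousLinearMap.proj_apply, Pi.single_apply,
    Finset.sum_ite_eq', mul_comm]

lemma qbound : ∃ C : ℝ, 1 ≤ C ∧ ∀ t : ℝ, |deriv Real.smoothTransition t| ≤ C := by
  have hcd : ContDiff ℝ 1 Real.smoothTransition := Real.smoothTransition.contDiff (n := 1)
  have hc : Continuous (deriv Real.smoothTransition) :=
    hcd.continuous_deriv le_rfl
  have hsupp : HasCompactSupport (deriv Real.smoothTransition) := by
    apply HasCompactSupport.intro (isCompact_Icc (a := (0:ℝ)) (b := 1))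
    intro t ht
    simp only [Set.mem_Icc, not_and_or, not_le] at ht
    rcases ht with ht | ht
    · have : Real.smoothTransition =ᶠ[nhds t] fun _ => 0 := by
        filter_upwards [Iio_mem_nhds ht] with s hs
        exact Real.smoothTransition.zero_of_nonpos (le_of_lt hs)
      rw [this.deriv_eq, deriv_const]
    · have : Real.smoothTransition =ᶠ[nhds t] fun _ => 1 := by
        filter_upwards [Ioi_mem_nhds ht] with s hs
        exact Real.smoothTransition.one_of_one_le (le_of_lt hs)
      rw [this.deriv_eq, deriv_const]
  obtain ⟨C, hC⟩ := hsupp.exists_bound_of_continuous hc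
  refine ⟨max C 1, le_max_right _ _, fun t => ?_⟩
  calc |deriv Real.smoothTransition t| = ‖deriv Real.smoothTransition t‖ := rfl
  _ ≤ C := hC t
  _ ≤ max C 1 := le_max_left _ _

noncomputable def zeta {d : ℕ} (R : ℝ) (x : Fin d → ℝ) : ℝ :=
  Real.smoothTransition ((3 * Real.log R - Real.log (uu x)) / (2 * Real.log R))

lemma one_le_logR {R : ℝ} (hR : 3 ≤ R) : 1 ≤ Real.log R := by
  rw [Real.le_log_iff_exp_le (by linarith)]
  have := Real.exp_one_lt_d9
  linarith

lemma zeta_eq_one {d : ℕ} {R : ℝ} (hR : 3 ≤ R) {x : Fin d → ℝ} (hx : uu x ≤ R) :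
    zeta R x = 1 := by
  have hT := one_le_logR hR
  apply Real.smoothTransition.one_of_one_le
  rw [le_div_iff₀ (by linarith)]
  have hlog : Real.log (uu x) ≤ Real.log R := by
    rcases le_or_gt (uu x) 0 with h | h
    · have hz : uu x = 0 := le_antisymm h (uu_nonneg x)
      rw [hz, Real.log_zero]
      linarith
    · exact Real.log_le_log h hx
  linarith

lemma zeta_eq_zero {d : ℕ} {R : ℝ} (hR : 3 ≤ R) {x : Fin d → ℝ} (hx : R ^ 3 ≤ uu x) :
    zeta R x = 0 := by
  have hT := one_le_logR hR
  apply Real.smoothTransition.zero_of_nonpos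
  apply div_nonpos_of_nonpos_of_nonneg _ (by linarith)
  have : Real.log (R ^ 3) ≤ Real.log (uu x) := Real.log_le_log (by positivity) hx
  rw [Real.log_pow] at this
  push_cast at this
  linarith

lemma zeta_nonneg {d : ℕ} (R : ℝ) (x : Fin d → ℝ) : 0 ≤ zeta R x :=
  Real.smoothTransition.nonneg _

lemma zeta_le_one {d : ℕ} (R : ℝ) (x : Fin d → ℝ) : zeta R x ≤ 1 :=
  Real.smoothTransition.le_one _

lemma zeta_contDiff {d : ℕ} {R : ℝ} (hR : 3 ≤ R) : ContDiff ℝ 1 (zeta (d := d) R) := by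
  rw [contDiff_iff_contDiffAt]
  intro x
  rcases lt_or_ge (uu x) R with h | h
  · -- locally constant 1
    have hop : IsOpen {y : Fin d → ℝ | uu y < R} :=
      isOpen_lt uu_contDiff.continuous continuous_const
    have : zeta R =ᶠ[nhds x] fun _ => 1 := by
      filter_upwards [hop.mem_nhds h] with y hy
      exact zeta_eq_one hR (le_of_lt hy)
    exact (contDiffAt_const (c := (1:ℝ))).congr_of_eventuallyEq this
  · -- uu x > 0
    have hpos : 0 < uu x := lt_of_lt_of_le (by linarith) h
    apply ContDiffAt.comp
    · exact (Real.smoothTransition.contDiff (n := 1)).contDiffAt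
    · apply ContDiffAt.div_const
      apply ContDiffAt.sub contDiffAt_const
      exact (Real.contDiffAt_log.mpr (ne_of_gt hpos)).comp x uu_contDiff.contDiffAt

lemma zeta_hasCompactSupport {d : ℕ} {R : ℝ} (hR : 3 ≤ R) :
    HasCompactSupport (zeta (d := d) R) := by
  apply HasCompactSupport.intro (isCompact_closedBall (0 : Fin d → ℝ) (R ^ 2))
  intro x hx
  apply zeta_eq_zero hR
  by_contra hcon
  push_neg at hcon
  apply hx
  rw [Metric.mem_closedBall, dist_zero_right]
  rcases isEmpty_or_nonempty (Fin d) with hd | hd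
  · have : x = 0 := Subsingleton.elim x 0
    rw [this, norm_zero]
    positivity
  rw [pi_norm_le_iff_of_nonneg (by positivity)]
  intro i
  have h1 : x i ^ 2 ≤ uu x := by
    apply Finset.single_le_sum (f := fun j => x j ^ 2) (fun j _ => sq_nonneg _) (Finset.mem_univ i)
  have h2 : x i ^ 2 ≤ (R ^ 2) ^ 2 := by nlinarith [sq_nonneg (R^2)]
  rw [Real.norm_eq_abs]
  nlinarith [abs_nonneg (x i), sq_abs (x i), sq_nonneg (|x i| - R ^ 2), sq_nonneg (|x i| + R ^ 2)]

lemma zeta_hasFDerivAt {d : ℕ} {R : ℝ} (hR : 3 ≤ R) {x : Fin d → ℝ} (hx : 0 < uu x) :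
    HasFDerivAt (zeta R)
      ((deriv Real.smoothTransition ((3 * Real.log R - Real.log (uu x)) / (2 * Real.log R)) *
        (-(uu x)⁻¹ / (2 * Real.log R))) •
        (∑ i, (2 * x i) • (ContinuousLinearMap.proj (R := ℝ) (φ := fun _ : Fin d => ℝ) i))) x := by
  have hT := one_le_logR hR
  have hU := hasFDerivAt_uu x
  have hlog : HasDerivAt Real.log (uu x)⁻¹ (uu x) := Real.hasDerivAt_log (ne_of_gt hx)
  have hw : HasDerivAt (fun s => (3 * Real.log R - Real.log s) / (2 * Real.log R))
      (-(uu x)⁻¹ / (2 * Real.log R)) (uu x) := by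
    have := ((hasDerivAt_const (uu x) (3 * Real.log R)).sub hlog).div_const (2 * Real.log R)
    simpa using this
  have hq : HasDerivAt Real.smoothTransition
      (deriv Real.smoothTransition ((3 * Real.log R - Real.log (uu x)) / (2 * Real.log R)))
      ((3 * Real.log R - Real.log (uu x)) / (2 * Real.log R)) := by
    have : DifferentiableAt ℝ Real.smoothTransition
        ((3 * Real.log R - Real.log (uu x)) / (2 * Real.log R)) :=
      ((Real.smoothTransition.contDiff (n := 1)).differentiable one_ne_zero).differentiableAt
    exact this.hasDerivAt
  have hcomp := (hq.comp (uu x) hw).comp_hasFDerivAt x hU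
  exact hcomp

lemma grad_zeta_eq {d : ℕ} {R : ℝ} (hR : 3 ≤ R) {x : Fin d → ℝ} (hx : 0 < uu x) (i : Fin d) :
    grad (zeta R) x i =
      deriv Real.smoothTransition ((3 * Real.log R - Real.log (uu x)) / (2 * Real.log R)) *
        (-(uu x)⁻¹ / (2 * Real.log R)) * (2 * x i) := by
  have h := (zeta_hasFDerivAt hR hx).fderiv
  unfold grad
  rw [h, ContinuousLinearMap.smul_apply, uu_proj_single]
  simp [mul_assoc]

lemma grad_zeta_zero {d : ℕ} {R : ℝ} (hR : 3 ≤ R) {x : Fin d → ℝ} (hx : uu x < R) (i : Fin d) :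
    grad (zeta R) x i = 0 := by
  have hop : IsOpen {y : Fin d → ℝ | uu y < R} :=
    isOpen_lt uu_contDiff.continuous continuous_const
  have heq : zeta R =ᶠ[nhds x] fun _ => 1 := by
    filter_upwards [hop.mem_nhds hx] with y hy
    exact zeta_eq_one hR (le_of_lt hy)
  unfold grad
  rw [heq.fderiv_eq, fderiv_fun_const]
  simp

lemma deriv_q_zero_of_neg {t : ℝ} (ht : t < 0) : deriv Real.smoothTransition t = 0 := by
  have : Real.smoothTransition =ᶠ[nhds t] fun _ => 0 := by
    filter_upwards [Iio_mem_nhds ht] with s hs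
    exact Real.smoothTransition.zero_of_nonpos (le_of_lt hs)
  rw [this.deriv_eq, deriv_const]

lemma grad_zeta_sq_bound {d : ℕ} {R C : ℝ} (hR : 3 ≤ R) (hC1 : 1 ≤ C)
    (hC : ∀ t : ℝ, |deriv Real.smoothTransition t| ≤ C) (x : Fin d → ℝ) :
    ∑ i, (grad (zeta R) x i) ^ 2 ≤
      (C ^ 2 / (Real.log R) ^ 2) *
        Set.indicator {y : Fin d → ℝ | uu y ∈ Set.Icc R (R ^ 3)} (fun y => (uu y)⁻¹) x := by
  have hT := one_le_logR hR
  have hCpos : 0 < C := by linarith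
  rcases lt_or_ge (uu x) R with h | h
  · have h0 : ∀ i, grad (zeta R) x i = 0 := grad_zeta_zero hR h
    simp only [h0]
    have : (0:ℝ) ≤ (C ^ 2 / (Real.log R) ^ 2) *
        Set.indicator {y : Fin d → ℝ | uu y ∈ Set.Icc R (R ^ 3)} (fun y => (uu y)⁻¹) x := by
      apply mul_nonneg (by positivity)
      apply Set.indicator_nonneg
      intro y hy
      exact inv_nonneg.mpr (uu_nonneg y)
    simpa using this
  · have hx : 0 < uu x := lt_of_lt_of_le (by linarith) h
    set dq := deriv Real.smoothTransition ((3 * Real.log R - Real.log (uu x)) / (2 * Real.log R)) with hdq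
    have hform : ∀ i, grad (zeta R) x i = dq * (-(uu x)⁻¹ / (2 * Real.log R)) * (2 * x i) :=
      grad_zeta_eq hR hx
    have hsum : ∑ i, (grad (zeta R) x i) ^ 2 = dq ^ 2 / ((Real.log R) ^ 2 * uu x) := by
      have h1 : ∀ i, (grad (zeta R) x i) ^ 2 =
          (dq ^ 2 * ((uu x)⁻¹)^2 / (Real.log R) ^ 2) * (x i ^ 2) := by
        intro i
        rw [hform i]
        field_simp
      rw [Finset.sum_congr rfl fun i _ => h1 i, ← Finset.mul_sum]
      show (dq ^ 2 * ((uu x)⁻¹)^2 / (Real.log R) ^ 2) * uu x = _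
      field_simp
    rw [hsum]
    rcases le_or_gt (uu x) (R ^ 3) with h3 | h3
    · have hmem : x ∈ {y : Fin d → ℝ | uu y ∈ Set.Icc R (R ^ 3)} := ⟨h, h3⟩
      rw [Set.indicator_of_mem hmem]
      rw [div_le_iff₀ (by positivity)]
      have hdqsq : dq ^ 2 ≤ C ^ 2 := by
        have := hC ((3 * Real.log R - Real.log (uu x)) / (2 * Real.log R))
        nlinarith [sq_abs dq, abs_nonneg dq]
      have : C ^ 2 / (Real.log R) ^ 2 * (uu x)⁻¹ * ((Real.log R) ^ 2 * uu x) = C ^ 2 := by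
        field_simp
      rw [this]
      exact hdqsq
    · have hnmem : x ∉ {y : Fin d → ℝ | uu y ∈ Set.Icc R (R ^ 3)} := by
        intro hmem
        exact absurd hmem.2 (not_le.mpr h3)
      rw [Set.indicator_of_notMem hnmem, mul_zero]
      have hdq0 : dq = 0 := by
        apply deriv_q_zero_of_neg
        apply div_neg_of_neg_of_pos _ (by linarith)
        have : Real.log (R ^ 3) < Real.log (uu x) := by
          apply Real.log_lt_log (by positivity) h3
        rw [Real.log_pow] at this
        push_cast at this
        linarith
      rw [hdq0]
      simp

lemma ball_pow_bound {d : ℕ} (hd1 : 0 < d) (hd : d ≤ 2) {r : ℝ} (hr : 1 ≤ r) :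
    (2 * Real.sqrt (2 * r)) ^ d ≤ 8 * r := by
  interval_cases d
  · have h1 : Real.sqrt (2 * r) ≤ Real.sqrt ((4 * r) ^ 2) := by
      apply Real.sqrt_le_sqrt
      nlinarith
    rw [Real.sqrt_sq (by linarith)] at h1
    calc (2 * Real.sqrt (2 * r)) ^ 1 = 2 * Real.sqrt (2 * r) := pow_one _
    _ ≤ 2 * (4 * r) := by linarith
    _ = 8 * r := by ring
  · have h1 : Real.sqrt (2 * r) ^ 2 = 2 * r := Real.sq_sqrt (by linarith)
    nlinarith [h1]

lemma shell_volume {d : ℕ} {a : ℝ} (ha : 0 ≤ a) :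
    volume {y : Fin d → ℝ | uu y ≤ a} ≤ ENNReal.ofReal ((2 * Real.sqrt a) ^ d) := by
  have hsub : {y : Fin d → ℝ | uu y ≤ a} ⊆ Metric.closedBall 0 (Real.sqrt a) := by
    intro x hx
    rw [Metric.mem_closedBall, dist_zero_right]
    rcases isEmpty_or_nonempty (Fin d) with h | h
    · have : x = 0 := Subsingleton.elim x 0
      rw [this, norm_zero]
      positivity
    rw [pi_norm_le_iff_of_nonneg (Real.sqrt_nonneg a)]
    intro i
    rw [Real.norm_eq_abs, ← Real.sqrt_sq_eq_abs]
    apply Real.sqrt_le_sqrt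
    calc x i ^ 2 ≤ uu x :=
      Finset.single_le_sum (f := fun j => x j ^ 2) (fun j _ => sq_nonneg _) (Finset.mem_univ i)
    _ ≤ a := hx
  calc volume {y : Fin d → ℝ | uu y ≤ a} ≤ volume (Metric.closedBall (0 : Fin d → ℝ) (Real.sqrt a)) :=
    measure_mono hsub
  _ = ENNReal.ofReal ((2 * Real.sqrt a) ^ Fintype.card (Fin d)) :=
    Real.volume_pi_closedBall 0 (Real.sqrt_nonneg a)
  _ = ENNReal.ofReal ((2 * Real.sqrt a) ^ d) := by rw [Fintype.card_fin]

lemma shell_sum_bound {d : ℕ} (hd1 : 0 < d) (hd : d ≤ 2) {R : ℝ} (hR : 3 ≤ R) :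
    ∃ H : (Fin d → ℝ) → ℝ, Integrable H volume ∧
      (∀ x, Set.indicator {y : Fin d → ℝ | uu y ∈ Set.Icc R (R ^ 3)}
        (fun y => (uu y)⁻¹) x ≤ H x) ∧
      (∀ x, 0 ≤ H x) ∧
      (∫ x, H x) ≤ 40 * Real.log R := by
  have hT : 1 ≤ Real.log R := one_le_logR hR
  have hR0 : (0:ℝ) < R := by linarith
  set N := Nat.ceil (Real.logb 2 (R ^ 2)) with hN
  set S : ℕ → Set (Fin d → ℝ) :=
    fun k => {y | uu y ∈ Set.Icc ((2:ℝ) ^ k * R) ((2:ℝ) ^ (k + 1) * R)} with hS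
  have hmeas : ∀ k, MeasurableSet (S k) := fun k =>
    (isClosed_Icc.preimage uu_contDiff.continuous).measurableSet
  have hone : ∀ k : ℕ, (1:ℝ) ≤ (2:ℝ) ^ k * R := by
    intro k
    have h1 : (1:ℕ) ≤ 2 ^ k := Nat.one_le_two_pow
    have h1' : (1:ℝ) ≤ (2:ℝ) ^ k := by exact_mod_cast h1
    nlinarith
  have hvol : ∀ k, volume (S k) ≤ ENNReal.ofReal ((2 * Real.sqrt ((2:ℝ) ^ (k + 1) * R)) ^ d) := by
    intro k
    refine le_trans (measure_mono ?_) (shell_volume (by positivity))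
    intro x hx
    exact hx.2
  have hfin : ∀ k, volume (S k) < ⊤ := fun k =>
    lt_of_le_of_lt (hvol k) ENNReal.ofReal_lt_top
  have hintk : ∀ k, Integrable ((S k).indicator
      (fun _ : Fin d → ℝ => ((2:ℝ) ^ k * R)⁻¹)) volume := by
    intro k
    rw [integrable_indicator_iff (hmeas k)]
    exact integrableOn_const (hfin k).ne
  refine ⟨fun x => ∑ k ∈ Finset.range (N + 1),
    (S k).indicator (fun _ => ((2:ℝ) ^ k * R)⁻¹) x, ?_, ?_, ?_, ?_⟩
  · exact integrable_finset_sum _ fun k _ => hintk k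
  · -- pointwise domination
    intro x
    by_cases hx : x ∈ {y : Fin d → ℝ | uu y ∈ Set.Icc R (R ^ 3)}
    · obtain ⟨hx1, hx2⟩ := id hx
      have hxpos : 0 < uu x := lt_of_lt_of_le hR0 hx1
      set m := Nat.floor (uu x / R) with hm
      set k := Nat.log 2 m with hk
      have hm1 : 1 ≤ m := by
        rw [hm]
        apply Nat.le_floor
        rw [Nat.cast_one, le_div_iff₀ hR0]
        linarith
      have hpowm : ((2:ℝ)) ^ k ≤ (m : ℝ) := by
        have := Nat.pow_log_le_self 2 (by omega : m ≠ 0)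
        exact_mod_cast this
      have hk1 : (2:ℝ) ^ k * R ≤ uu x := by
        have h2 : (m : ℝ) ≤ uu x / R := Nat.floor_le (by positivity)
        rw [le_div_iff₀ hR0] at h2
        nlinarith
      have hk2 : uu x ≤ (2:ℝ) ^ (k + 1) * R := by
        have h2 : uu x / R < (m : ℝ) + 1 := Nat.lt_floor_add_one _
        have h3 : m + 1 ≤ 2 ^ (k + 1) := Nat.lt_pow_succ_log_self one_lt_two m
        have h4 : ((m : ℝ)) + 1 ≤ (2:ℝ) ^ (k + 1) := by exact_mod_cast h3
        rw [div_lt_iff₀ hR0] at h2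
        nlinarith
      have hkN : k ≤ N := by
        have h2N : (R:ℝ) ^ 2 ≤ (2:ℝ) ^ N := by
          have hle : Real.logb 2 (R ^ 2) ≤ (N : ℝ) := Nat.le_ceil _
          have : (R:ℝ) ^ 2 = (2:ℝ) ^ Real.logb 2 (R ^ 2) :=
            (Real.rpow_logb (by norm_num) (by norm_num) (by positivity)).symm
          rw [this, ← Real.rpow_natCast 2 N]
          exact Real.rpow_le_rpow_of_exponent_le (by norm_num) hle
        have hch : (2:ℝ) ^ k ≤ (2:ℝ) ^ N := by
          have h5 : (m:ℝ) ≤ uu x / R := Nat.floor_le (by positivity)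
          have h6 : uu x / R ≤ R ^ 2 := by
            rw [div_le_iff₀ hR0]
            nlinarith
          linarith
        exact (pow_le_pow_iff_right₀ one_lt_two).1 hch
      have hmemS : x ∈ S k := by
        simp only [hS, Set.mem_setOf_eq, Set.mem_Icc]
        exact ⟨hk1, hk2⟩
      calc Set.indicator {y : Fin d → ℝ | uu y ∈ Set.Icc R (R ^ 3)} (fun y => (uu y)⁻¹) x
          ≤ (uu x)⁻¹ := by
            rw [Set.indicator_of_mem hx]
      _ ≤ ((2:ℝ) ^ k * R)⁻¹ := by
            apply inv_anti₀ (by positivity) hk1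
      _ = (S k).indicator (fun _ => ((2:ℝ) ^ k * R)⁻¹) x := by
            rw [Set.indicator_of_mem hmemS]
      _ ≤ ∑ j ∈ Finset.range (N + 1), (S j).indicator (fun _ => ((2:ℝ) ^ j * R)⁻¹) x := by
            apply Finset.single_le_sum
              (f := fun j => (S j).indicator (fun _ => ((2:ℝ) ^ j * R)⁻¹) x)
            · intro j _
              apply Set.indicator_nonneg
              intro y _
              positivity
            · exact Finset.mem_range.2 (by omega)
    · rw [Set.indicator_of_notMem hx]
      apply Finset.sum_nonneg
      intro j _
      apply Set.indicator_nonneg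
      intro y _
      positivity
  · intro x
    apply Finset.sum_nonneg
    intro j _
    apply Set.indicator_nonneg
    intro y _
    positivity
  · rw [integral_finset_sum _ fun k _ => hintk k]
    have hterm : ∀ k ∈ Finset.range (N + 1),
        (∫ x : Fin d → ℝ, (S k).indicator (fun _ => ((2:ℝ) ^ k * R)⁻¹) x) ≤ 8 := by
      intro k _
      rw [integral_indicator_const _ (hmeas k), smul_eq_mul]
      have h1 : (volume (S k)).toReal ≤ (2 * Real.sqrt ((2:ℝ) ^ (k + 1) * R)) ^ d :=
        ENNReal.toReal_le_of_le_ofReal (by positivity) (hvol k)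
      have h2 : ((2:ℝ) ^ (k + 1) * R) = 2 * ((2:ℝ) ^ k * R) := by ring
      have h3 : (2 * Real.sqrt ((2:ℝ) ^ (k + 1) * R)) ^ d ≤ 8 * ((2:ℝ) ^ k * R) := by
        rw [h2]
        exact ball_pow_bound hd1 hd (hone k)
      calc (volume (S k)).toReal * ((2:ℝ) ^ k * R)⁻¹
          ≤ (8 * ((2:ℝ) ^ k * R)) * ((2:ℝ) ^ k * R)⁻¹ := by
            apply mul_le_mul_of_nonneg_right (le_trans h1 h3) (by positivity)
      _ = 8 := by
            field_simp
    calc ∑ k ∈ Finset.range (N + 1),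
        (∫ x : Fin d → ℝ, (S k).indicator (fun _ => ((2:ℝ) ^ k * R)⁻¹) x)
        ≤ ∑ k ∈ Finset.range (N + 1), (8:ℝ) := Finset.sum_le_sum hterm
    _ = 8 * ((N:ℝ) + 1) := by
          rw [Finset.sum_const, Finset.card_range]
          push_cast
          ring
    _ ≤ 40 * Real.log R := by
          have hlog2 := Real.log_two_gt_d9
          have hNb : (N:ℝ) < Real.logb 2 (R ^ 2) + 1 := by
            rw [hN]
            apply Nat.ceil_lt_add_one
            apply Real.logb_nonneg (by norm_num)
            nlinarith
          have hlogb : Real.logb 2 (R ^ 2) ≤ 3 * Real.log R := by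
            rw [Real.logb, Real.log_pow]
            rw [div_le_iff₀ (by linarith : (0:ℝ) < Real.log 2)]
            push_cast
            nlinarith
          linarith

lemma grad_eq_fderiv {d : ℕ} (f : (Fin d → ℝ) → ℝ) (x : Fin d → ℝ) (i : Fin d) :
    grad f x i = fderiv ℝ f x (Pi.single i 1) := rfl

lemma integral_grad_zeta_sq {d : ℕ} (hd1 : 0 < d) (hd : d ≤ 2) {R C : ℝ} (hR : 3 ≤ R)
    (hC1 : 1 ≤ C) (hC : ∀ t : ℝ, |deriv Real.smoothTransition t| ≤ C) :
    Integrable (fun x : Fin d → ℝ => ∑ i, (grad (zeta R) x i) ^ 2) volume ∧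
    (∫ x : Fin d → ℝ, ∑ i, (grad (zeta R) x i) ^ 2) ≤ 40 * C ^ 2 / Real.log R := by
  have hT : 1 ≤ Real.log R := one_le_logR hR
  have hζ := zeta_contDiff (d := d) hR
  have hfc : Continuous (fderiv ℝ (zeta (d := d) R)) := hζ.continuous_fderiv one_ne_zero
  have hGc : Continuous (fun x : Fin d → ℝ => ∑ i, (grad (zeta R) x i) ^ 2) := by
    apply continuous_finset_sum
    intro i _
    exact (hfc.clm_apply continuous_const).pow 2
  have hGsupp : HasCompactSupport (fun x : Fin d → ℝ => ∑ i, (grad (zeta R) x i) ^ 2) := by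
    have h1 : HasCompactSupport (fderiv ℝ (zeta (d := d) R)) :=
      (zeta_hasCompactSupport hR).fderiv ℝ
    exact h1.comp_left
      (g := fun L : (Fin d → ℝ) →L[ℝ] ℝ => ∑ i, (L (Pi.single i 1)) ^ 2) (by simp)
  have hGint : Integrable (fun x : Fin d → ℝ => ∑ i, (grad (zeta R) x i) ^ 2) volume :=
    hGc.integrable_of_hasCompactSupport hGsupp
  refine ⟨hGint, ?_⟩
  obtain ⟨H, hHint, hHdom, hHnn, hHle⟩ := shell_sum_bound hd1 hd hR
  have hpt : ∀ x : Fin d → ℝ, ∑ i, (grad (zeta R) x i) ^ 2 ≤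
      (C ^ 2 / (Real.log R) ^ 2) * H x := by
    intro x
    refine le_trans (grad_zeta_sq_bound hR hC1 hC x) ?_
    exact mul_le_mul_of_nonneg_left (hHdom x) (by positivity)
  calc (∫ x : Fin d → ℝ, ∑ i, (grad (zeta R) x i) ^ 2)
      ≤ ∫ x : Fin d → ℝ, (C ^ 2 / (Real.log R) ^ 2) * H x :=
        integral_mono hGint (hHint.const_mul _) hpt
  _ = (C ^ 2 / (Real.log R) ^ 2) * ∫ x, H x := integral_const_mul _ _
  _ ≤ (C ^ 2 / (Real.log R) ^ 2) * (40 * Real.log R) :=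
        mul_le_mul_of_nonneg_left hHle (by positivity)
  _ = 40 * C ^ 2 / Real.log R := by
        field_simp

lemma grad_prod_formula {d : ℕ} {R : ℝ} (hR : 3 ≤ R)
    (ψ : (Fin d → ℝ) → ℝ) (hψc : ContDiff ℝ 1 ψ) (x : Fin d → ℝ) (i : Fin d) :
    grad (fun y => ψ y * (zeta R y) ^ 2) x i =
      (zeta R x) ^ 2 * grad ψ x i + ψ x * (2 * zeta R x * grad (zeta R) x i) := by
  have hψd : HasFDerivAt ψ (fderiv ℝ ψ x) x :=
    ((hψc.differentiable one_ne_zero) x).hasFDerivAt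
  have hζd : HasFDerivAt (zeta (d := d) R) (fderiv ℝ (zeta (d := d) R) x) x :=
    (((zeta_contDiff hR).differentiable one_ne_zero) x).hasFDerivAt
  have hz2 : HasFDerivAt (fun y => zeta R y * zeta R y)
      (zeta R x • fderiv ℝ (zeta (d := d) R) x + zeta R x • fderiv ℝ (zeta (d := d) R) x) x :=
    hζd.mul hζd
  have hmul := hψd.mul hz2
  have heq : (fun y => ψ y * (zeta R y) ^ 2) = fun y => ψ y * (zeta R y * zeta R y) := by
    funext y; ring
  rw [grad_eq_fderiv, heq]
  rw [HasFDerivAt.fderiv (f := fun y => ψ y * (zeta R y * zeta R y)) hmul]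
  simp only [ContinuousLinearMap.add_apply, ContinuousLinearMap.smul_apply, smul_eq_mul]
  rw [← grad_eq_fderiv, ← grad_eq_fderiv]
  ring

lemma caccioppoli {d : ℕ} (hd1 : 0 < d) (hd : d ≤ 2)
    (σ : (Fin d → ℝ) → ℝ) (hσc : ContDiff ℝ 1 σ)
    (ψ : (Fin d → ℝ) → ℝ) (hψc : ContDiff ℝ 1 ψ)
    (hψsol : ∀ φ : (Fin d → ℝ) → ℝ, ContDiff ℝ 1 φ → HasCompactSupport φ →
      (∫ x : Fin d → ℝ, (σ x) ^ 2 * (∑ i, grad ψ x i * grad φ x i)) = 0)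
    (M : ℝ) (hbd : ∀ x, |σ x * ψ x| ≤ M)
    {R C : ℝ} (hR : 3 ≤ R) (hC1 : 1 ≤ C)
    (hC : ∀ t : ℝ, |deriv Real.smoothTransition t| ≤ C) :
    Integrable (fun x : Fin d → ℝ =>
      (σ x) ^ 2 * (zeta R x) ^ 2 * ∑ i, (grad ψ x i) ^ 2) volume ∧
    (∫ x : Fin d → ℝ, (σ x) ^ 2 * (zeta R x) ^ 2 * ∑ i, (grad ψ x i) ^ 2)
      ≤ 4 * M ^ 2 * (40 * C ^ 2 / Real.log R) := by
  have hT : 1 ≤ Real.log R := one_le_logR hR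
  set G : (Fin d → ℝ) → ℝ := fun x => ∑ i, (grad (zeta R) x i) ^ 2 with hG
  obtain ⟨hGint, hGle⟩ := integral_grad_zeta_sq hd1 hd hR hC1 hC
  -- continuity facts
  have hψf : Continuous (fderiv ℝ ψ) := hψc.continuous_fderiv one_ne_zero
  have hζc : Continuous (zeta (d := d) R) := (zeta_contDiff hR).continuous
  have hζf : Continuous (fderiv ℝ (zeta (d := d) R)) :=
    (zeta_contDiff hR).continuous_fderiv one_ne_zero
  have hgψc : ∀ i, Continuous fun x : Fin d → ℝ => grad ψ x i := fun i =>
    hψf.clm_apply continuous_const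
  have hgζc : ∀ i, Continuous fun x : Fin d → ℝ => grad (zeta R) x i := fun i =>
    hζf.clm_apply continuous_const
  set E1 : (Fin d → ℝ) → ℝ := fun x =>
    (σ x) ^ 2 * (zeta R x) ^ 2 * ∑ i, (grad ψ x i) ^ 2 with hE1
  set E2 : (Fin d → ℝ) → ℝ := fun x =>
    ∑ i, 2 * (σ x) ^ 2 * ψ x * zeta R x * grad ψ x i * grad (zeta R) x i with hE2
  have hE1c : Continuous E1 := by
    apply Continuous.mul
    apply Continuous.mul (hσc.continuous.pow 2) (hζc.pow 2)
    exact continuous_finset_sum _ fun i _ => (hgψc i).pow 2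
  have hE2c : Continuous E2 := by
    apply continuous_finset_sum
    intro i _
    exact ((((((continuous_const.mul (hσc.continuous.pow 2))).mul
      hψc.continuous).mul hζc).mul (hgψc i)).mul (hgζc i))
  have hE1supp : HasCompactSupport E1 := by
    apply HasCompactSupport.intro ((zeta_hasCompactSupport (d := d) hR))
    intro x hx
    have : zeta R x = 0 := image_eq_zero_of_notMem_tsupport hx
    simp [hE1, this]
  have hE2supp : HasCompactSupport E2 := by
    apply HasCompactSupport.intro ((zeta_hasCompactSupport (d := d) hR).fderiv ℝ)
    intro x hx
    have h0 : fderiv ℝ (zeta (d := d) R) x = 0 := image_eq_zero_of_notMem_tsupport hx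
    have : ∀ i, grad (zeta R) x i = 0 := by
      intro i
      rw [grad_eq_fderiv, h0]
      simp
    simp only [hE2]
    apply Finset.sum_eq_zero
    intro i _
    rw [this i, mul_zero]
  have hE1int : Integrable E1 volume := hE1c.integrable_of_hasCompactSupport hE1supp
  have hE2int : Integrable E2 volume := hE2c.integrable_of_hasCompactSupport hE2supp
  refine ⟨hE1int, ?_⟩
  -- apply the weak equation with test function φ = ψ ζ²
  set φ : (Fin d → ℝ) → ℝ := fun y => ψ y * (zeta R y) ^ 2 with hφ
  have hφc : ContDiff ℝ 1 φ := hψc.mul ((zeta_contDiff hR).pow 2)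
  have hφsupp : HasCompactSupport φ := by
    apply HasCompactSupport.intro ((zeta_hasCompactSupport (d := d) hR))
    intro x hx
    have : zeta R x = 0 := image_eq_zero_of_notMem_tsupport hx
    simp [hφ, this]
  have hsol := hψsol φ hφc hφsupp
  have hpoint : ∀ x : Fin d → ℝ,
      (σ x) ^ 2 * (∑ i, grad ψ x i * grad φ x i) = E1 x + E2 x := by
    intro x
    have hgφ : ∀ i, grad φ x i =
        (zeta R x) ^ 2 * grad ψ x i + ψ x * (2 * zeta R x * grad (zeta R) x i) :=
      grad_prod_formula hR ψ hψc x
    simp only [hE1, hE2, hgφ, Finset.mul_sum, ← Finset.sum_add_distrib]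
    apply Finset.sum_congr rfl
    intro i _
    ring
  have hsum0 : (∫ x : Fin d → ℝ, E1 x + E2 x) = 0 := by
    rw [← hsol]
    congr 1
    funext x
    exact (hpoint x).symm
  rw [integral_add hE1int hE2int] at hsum0
  -- pointwise AM-GM
  have hM0 : 0 ≤ M := le_trans (abs_nonneg _) (hbd (fun _ => 0))
  have hAM : ∀ x : Fin d → ℝ, -E2 x ≤ (1/2) * E1 x + 2 * M ^ 2 * G x := by
    intro x
    have hσψ : (σ x * ψ x) ^ 2 ≤ M ^ 2 := by
      have := hbd x
      nlinarith [sq_abs (σ x * ψ x), abs_nonneg (σ x * ψ x)]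
    simp only [hE2, hE1, hG, ← Finset.sum_neg_distrib, Finset.mul_sum,
      ← Finset.sum_add_distrib]
    apply Finset.sum_le_sum
    intro i _
    nlinarith [sq_nonneg (σ x * zeta R x * grad ψ x i + 2 * (σ x * ψ x) * grad (zeta R) x i),
      mul_le_mul_of_nonneg_right hσψ (sq_nonneg (grad (zeta R) x i))]
  have hkey : (∫ x, E1 x) ≤ (1/2) * (∫ x, E1 x) + 2 * M ^ 2 * (∫ x, G x) := by
    calc (∫ x, E1 x) = ∫ x, -E2 x := by
          rw [integral_neg]; linarith
    _ ≤ ∫ x, ((1/2) * E1 x + 2 * M ^ 2 * G x) := by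
          apply integral_mono hE2int.neg
          · exact (hE1int.const_mul _).add (hGint.const_mul _)
          · exact hAM
    _ = (1/2) * (∫ x, E1 x) + 2 * M ^ 2 * (∫ x, G x) := by
          rw [integral_add (hE1int.const_mul _) (hGint.const_mul _),
            integral_const_mul, integral_const_mul]
  have hGnn : 0 ≤ ∫ x, G x := by
    apply integral_nonneg
    intro x
    apply Finset.sum_nonneg
    intro i _
    exact sq_nonneg _
  nlinarith [mul_le_mul_of_nonneg_left hGle (by positivity : (0:ℝ) ≤ 2 * M ^ 2)]


/-- Theorem 1.7 / Problem 1.3 (Berestycki–Caffarelli–Nirenberg, Ghoussoub–Gui) for `d ≤ 2`: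
if `σ > 0` is `C¹` on `ℝ^d`, `ψ` is a weak solution of `∇·(σ²∇ψ) = 0` in `ℝ^d` with
`ψ ≰ 0` and `σψ` bounded, then `ψ` is a positive constant. -/
theorem stmt_11 {d : ℕ} (hd1 : 0 < d) (hd : d ≤ 2)
    (σ : (Fin d → ℝ) → ℝ) (hσc : ContDiff ℝ 1 σ) (hσpos : ∀ x, 0 < σ x)
    (ψ : (Fin d → ℝ) → ℝ) (hψc : ContDiff ℝ 1 ψ)
    (hψsol : ∀ φ : (Fin d → ℝ) → ℝ, ContDiff ℝ 1 φ → HasCompactSupport φ →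
      (∫ x : Fin d → ℝ, (σ x) ^ 2 * (∑ i, grad ψ x i * grad φ x i)) = 0)
    (hψpos : ∃ x, 0 < ψ x)
    (M : ℝ) (hbd : ∀ x, |σ x * ψ x| ≤ M) :
    ∃ c : ℝ, 0 < c ∧ ∀ x, ψ x = c := by
  obtain ⟨C, hC1, hC⟩ := qbound
  have hM0 : 0 ≤ M := le_trans (abs_nonneg _) (hbd (fun _ => 0))
  set F0 : (Fin d → ℝ) → ℝ := fun x => (σ x) ^ 2 * ∑ i, (grad ψ x i) ^ 2 with hF0def
  have hψf : Continuous (fderiv ℝ ψ) := hψc.continuous_fderiv one_ne_zero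
  have hF0c : Continuous F0 := by
    apply Continuous.mul (hσc.continuous.pow 2)
    exact continuous_finset_sum _ fun i _ => (hψf.clm_apply continuous_const).pow 2
  have hF0nn : ∀ x, 0 ≤ F0 x := by
    intro x
    apply mul_nonneg (sq_nonneg _)
    exact Finset.sum_nonneg fun i _ => sq_nonneg _
  -- main claim: F0 vanishes identically
  have hF0zero : ∀ x0, F0 x0 = 0 := by
    intro x0
    by_contra hne
    have hpos : 0 < F0 x0 := lt_of_le_of_ne (hF0nn x0) (Ne.symm hne)
    have hopen : IsOpen {y : Fin d → ℝ | F0 x0 / 2 < F0 y} :=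
      isOpen_lt continuous_const hF0c
    have hx0mem : x0 ∈ {y : Fin d → ℝ | F0 x0 / 2 < F0 y} := by
      simp only [Set.mem_setOf_eq]
      linarith
    obtain ⟨ρ, hρ, hball⟩ := Metric.isOpen_iff.1 hopen x0 hx0mem
    set B := Metric.closedBall x0 (ρ / 2) with hB
    have hBsub : B ⊆ {y : Fin d → ℝ | F0 x0 / 2 < F0 y} :=
      subset_trans (Metric.closedBall_subset_ball (by linarith)) hball
    have hBvolpos : 0 < volume B := Metric.measure_closedBall_pos volume x0 (by linarith)
    have hBvolfin : volume B < ⊤ := (isCompact_closedBall x0 (ρ / 2)).measure_lt_top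
    set ε := (F0 x0 / 2) * (volume B).toReal with hεdef
    have hε : 0 < ε := by
      apply mul_pos (by linarith)
      exact ENNReal.toReal_pos (ne_of_gt hBvolpos) (ne_of_lt hBvolfin)
    set Ub := (d : ℝ) * (‖x0‖ + ρ) ^ 2 with hUb
    set R := max 3 (max (Ub + 1) (Real.exp (160 * C ^ 2 * (M ^ 2 + 1) / ε))) with hRdef
    have hR : 3 ≤ R := le_max_left _ _
    have hT1 : 1 ≤ Real.log R := one_le_logR hR
    have hTge : 160 * C ^ 2 * (M ^ 2 + 1) / ε ≤ Real.log R := by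
      rw [Real.le_log_iff_exp_le (by linarith)]
      exact le_trans (le_max_right _ _) (le_max_right _ _)
    have hρ0 : 0 < ρ := hρ
    -- ζ equals 1 on B
    have hζ1 : ∀ x ∈ B, zeta R x = 1 := by
      intro x hx
      apply zeta_eq_one hR
      have hxn : ‖x‖ ≤ ‖x0‖ + ρ := by
        have h1 : ‖x - x0‖ ≤ ρ / 2 := by
          rw [← dist_eq_norm]
          exact Metric.mem_closedBall.1 hx
        calc ‖x‖ = ‖x - x0 + x0‖ := by ring_nf
        _ ≤ ‖x - x0‖ + ‖x0‖ := norm_add_le _ _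
        _ ≤ ‖x0‖ + ρ := by linarith
      have hterm : ∀ i, x i ^ 2 ≤ (‖x0‖ + ρ) ^ 2 := by
        intro i
        have h2 : |x i| ≤ ‖x‖ := by
          rw [← Real.norm_eq_abs]
          exact norm_le_pi_norm x i
        nlinarith [abs_nonneg (x i), sq_abs (x i), norm_nonneg x, norm_nonneg x0]
      have hsum : uu x ≤ Ub := by
        rw [hUb]
        calc uu x ≤ (Finset.univ : Finset (Fin d)).card • ((‖x0‖ + ρ) ^ 2) :=
          Finset.sum_le_card_nsmul _ _ _ fun i _ => hterm i
        _ = (d : ℝ) * (‖x0‖ + ρ) ^ 2 := by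
          rw [Finset.card_univ, Fintype.card_fin, nsmul_eq_mul]
      calc uu x ≤ Ub := hsum
      _ ≤ Ub + 1 := by linarith
      _ ≤ R := le_trans (le_max_left _ _) (le_max_right _ _)
    obtain ⟨hE1int, hE1le⟩ := caccioppoli hd1 hd σ hσc ψ hψc hψsol M hbd hR hC1 hC
    have hE1nn : ∀ x, 0 ≤ (σ x) ^ 2 * (zeta R x) ^ 2 * ∑ i, (grad ψ x i) ^ 2 := by
      intro x
      apply mul_nonneg (mul_nonneg (sq_nonneg _) (sq_nonneg _))
      exact Finset.sum_nonneg fun i _ => sq_nonneg _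
    have hlow : ε ≤ ∫ x : Fin d → ℝ, (σ x) ^ 2 * (zeta R x) ^ 2 * ∑ i, (grad ψ x i) ^ 2 := by
      calc ε = (F0 x0 / 2) * (volume B).toReal := rfl
      _ ≤ ∫ x in B, (σ x) ^ 2 * (zeta R x) ^ 2 * ∑ i, (grad ψ x i) ^ 2 := by
        rw [mul_comm, ← smul_eq_mul]
        apply setIntegral_ge_of_const_le measurableSet_closedBall (ne_of_lt hBvolfin)
        · intro x hx
          rw [hζ1 x hx]
          have := hBsub hx
          simp only [Set.mem_setOf_eq] at this
          calc F0 x0 / 2 ≤ F0 x := le_of_lt this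
          _ = (σ x) ^ 2 * 1 ^ 2 * ∑ i, (grad ψ x i) ^ 2 := by
            rw [hF0def]; ring
        · exact hE1int.integrableOn
      _ ≤ ∫ x : Fin d → ℝ, (σ x) ^ 2 * (zeta R x) ^ 2 * ∑ i, (grad ψ x i) ^ 2 :=
        setIntegral_le_integral hE1int (Filter.Eventually.of_forall hE1nn)
    -- contradiction
    have hT0 : 0 < Real.log R := by linarith
    have h1 : 160 * C ^ 2 * (M ^ 2 + 1) ≤ Real.log R * ε := by
      rw [div_le_iff₀ hε] at hTge
      linarith
    have h2 : 4 * M ^ 2 * (40 * C ^ 2 / Real.log R) < ε := by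
      rw [show 4 * M ^ 2 * (40 * C ^ 2 / Real.log R) = 160 * M ^ 2 * C ^ 2 / Real.log R by ring]
      rw [div_lt_iff₀ hT0]
      nlinarith [sq_nonneg C, sq_nonneg M]
    linarith
  -- deduce fderiv ψ = 0 everywhere
  have hgrad0 : ∀ x i, grad ψ x i = 0 := by
    intro x i
    have h0 := hF0zero x
    rw [hF0def] at h0
    have hσ2 : (σ x) ^ 2 ≠ 0 := by
      have := hσpos x
      positivity
    have hsum0 : ∑ i, (grad ψ x i) ^ 2 = 0 := by
      rcases mul_eq_zero.1 h0 with h | h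
      · exact absurd h hσ2
      · exact h
    have := (Finset.sum_eq_zero_iff_of_nonneg (fun i _ => sq_nonneg (grad ψ x i))).1 hsum0
      i (Finset.mem_univ i)
    exact pow_eq_zero_iff (by norm_num) |>.1 this
  have hfd : ∀ x, fderiv ℝ ψ x = 0 := by
    intro x
    apply ContinuousLinearMap.ext
    intro v
    have hv : v = ∑ i, v i • (Pi.single i 1 : Fin d → ℝ) := by
      have h1 : ∀ i, v i • (Pi.single i 1 : Fin d → ℝ) = Pi.single i (v i) := by
        intro i
        funext j
        by_cases h : j = i <;> simp [Pi.single_apply, h]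
      rw [Finset.sum_congr rfl fun i _ => h1 i, Finset.univ_sum_single]
    rw [hv, map_sum]
    have : ∀ i : Fin d, fderiv ℝ ψ x (Pi.single i 1) = 0 := fun i => hgrad0 x i
    simp only [ContinuousLinearMap.map_smul, this, smul_zero, Finset.sum_const_zero]
    rfl
  obtain ⟨xp, hxp⟩ := hψpos
  exact ⟨ψ xp, hxp, fun x =>
    is_const_of_fderiv_eq_zero (hψc.differentiable one_ne_zero) hfd x xp⟩
end
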